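/- arXiv:1904.06515 — 8 statements merged into one kernel-verified Lean document; each statement's English description precedes it below -/
import Mathlib

section
/- Let (g,[·,·],φ) be a regular Hom-Lie algebra. Define a new bracket on g by [x,y]_Lie := [φ⁻¹(x), φ⁻¹(y)] for all x,y ∈ g. Then (g,[·,·]_Lie) is a Lie algebra; in particular [·,·]_Lie is bilinear, skew-symmetric, and satisfies the Jacobi identity [x,[y,z]_Lie]_Lie + [y,[z,x]_Lie]_Lie + [z,[x,y]_Lie]_Lie = 0 for all x,y,z ∈ g. -/
/-!
Since `φ` is multiplicative, so is `φ⁻¹`; hence `[x, [y, z]_Lie]_Lie = [φ⁻¹ x, [φ⁻² y, φ⁻² z]]`,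
and the Jacobi identity for `[·,·]_Lie` is the Hom-Jacobi identity at `φ⁻² x, φ⁻² y, φ⁻² z`.
-/

section HomLie

variable {R M : Type*} [CommSemiring R] [AddCommMonoid M] [Module R M]
  (b : M →ₗ[R] M →ₗ[R] M) (φ : M ≃ₗ[R] M)

theorem LinearEquiv.symm_map_bracket (hmul : ∀ x y, φ (b x y) = b (φ x) (φ y)) (x y : M) :
    φ.symm (b x y) = b (φ.symm x) (φ.symm y) :=
  φ.symm_apply_eq.2 (by rw [hmul, φ.apply_symm_apply, φ.apply_symm_apply])

theorem jacobi_symm_twist (hmul : ∀ x y, φ (b x y) = b (φ x) (φ y))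
    (hjac : ∀ x y z, b (φ x) (b y z) + b (φ y) (b z x) + b (φ z) (b x y) = 0) (x y z : M) :
    b (φ.symm x) (φ.symm (b (φ.symm y) (φ.symm z)))
      + b (φ.symm y) (φ.symm (b (φ.symm z) (φ.symm x)))
      + b (φ.symm z) (φ.symm (b (φ.symm x) (φ.symm y))) = 0 := by
  simpa only [φ.symm_map_bracket b hmul, φ.apply_symm_apply] using
    hjac (φ.symm (φ.symm x)) (φ.symm (φ.symm y)) (φ.symm (φ.symm z))

end HomLie

/-- For a regular Hom-Lie algebra `(g, b, φ)`, the bracket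
`[x,y]_Lie := b (φ⁻¹ x) (φ⁻¹ y)` makes `g` a Lie algebra: it is bilinear,
skew-symmetric and satisfies the Jacobi identity. -/
theorem stmt0 {g : Type*} [AddCommGroup g] [Module ℝ g]
    (b : g →ₗ[ℝ] g →ₗ[ℝ] g) (φ : g ≃ₗ[ℝ] g)
    (hskew : ∀ x y : g, b x y = - b y x)
    (hmul : ∀ x y : g, φ (b x y) = b (φ x) (φ y))
    (hjac : ∀ x y z : g,
      b (φ x) (b y z) + b (φ y) (b z x) + b (φ z) (b x y) = 0) :
    (∀ (a : ℝ) (x x' y : g),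
      b (φ.symm (a • x + x')) (φ.symm y)
        = a • b (φ.symm x) (φ.symm y) + b (φ.symm x') (φ.symm y)) ∧
    (∀ (a : ℝ) (x y y' : g),
      b (φ.symm x) (φ.symm (a • y + y'))
        = a • b (φ.symm x) (φ.symm y) + b (φ.symm x) (φ.symm y')) ∧
    (∀ x y : g, b (φ.symm x) (φ.symm y) = - b (φ.symm y) (φ.symm x)) ∧
    (∀ x y z : g,
      b (φ.symm x) (φ.symm (b (φ.symm y) (φ.symm z)))
        + b (φ.symm y) (φ.symm (b (φ.symm z) (φ.symm x)))
        + b (φ.symm z) (φ.symm (b (φ.symm x) (φ.symm y))) = 0) := by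
  refine ⟨fun a x x' y => ?_, fun a x y y' => ?_, fun x y => hskew _ _,
    jacobi_symm_twist b φ hmul hjac⟩
  · simp only [map_add, map_smul, LinearMap.add_apply, LinearMap.smul_apply]
  · simp only [map_add, map_smul]
end

section
/- Let (G,⋄,e,Φ) be a regular Hom-group. Then: (i) Φ(e) = e; (ii) for each x ∈ G the inverse is unique, i.e., if x ⋄ u = u ⋄ x = e and x ⋄ v = v ⋄ x = e then u = v; (iii) (x ⋄ y)⁻¹ = y⁻¹ ⋄ x⁻¹ for all x,y ∈ G. -/
/-!
Since `Φ` is onto, `Φ e` is again a left Hom-unit, so `Φ (Φ e) = Φ e ⋄ e = Φ e` and `Φ e = e`.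
The usual monoid argument then shows that a left and a right inverse coincide, and a
Hom-associativity computation shows that `y⁻¹ ⋄ x⁻¹` is a two-sided inverse of `x ⋄ y`.
-/

namespace HomGroup

variable {G : Type*} {op : G → G → G} {Φ : G ≃ G} {e : G}

theorem map_unit (hmulΦ : ∀ x y : G, Φ (op x y) = op (Φ x) (Φ y))
    (hunit_right : ∀ x : G, op x e = Φ x) (hunit_left : ∀ x : G, op e x = Φ x) : Φ e = e := by
  have hΦe_left : ∀ x : G, op (Φ e) (Φ x) = Φ (Φ x) := fun x => by
    rw [← hmulΦ, hunit_left]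
  obtain ⟨e', he'⟩ := Φ.surjective e
  apply Φ.injective
  calc Φ (Φ e) = op (Φ e) e := (hunit_right _).symm
    _ = Φ e := by simpa only [he'] using hΦe_left e'

theorem left_inv_eq_right_inv (hassoc : ∀ x y z : G, op (Φ x) (op y z) = op (op x y) (Φ z))
    (hunit_right : ∀ x : G, op x e = Φ x) (hunit_left : ∀ x : G, op e x = Φ x) {x u v : G}
    (hux : op u x = e) (hxv : op x v = e) : u = v := by
  have h := hassoc u x v
  rw [hxv, hux, hunit_right, hunit_left] at h
  exact Φ.injective (Φ.injective h)

theorem op_op_rev_eq_unit (hmulΦ : ∀ x y : G, Φ (op x y) = op (Φ x) (Φ y))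
    (hassoc : ∀ x y z : G, op (Φ x) (op y z) = op (op x y) (Φ z))
    (hunit_left : ∀ x : G, op e x = Φ x) (hΦe : Φ e = e) {x x' y y' : G}
    (hx : op x x' = e) (hy : op y y' = e) : op (op x y) (op y' x') = e := by
  obtain ⟨c, rfl⟩ := Φ.surjective y
  obtain ⟨a, rfl⟩ := Φ.surjective y'
  obtain ⟨b, rfl⟩ := Φ.surjective x'
  have hca : op c a = e := Φ.injective (by rw [hmulΦ, hy, hΦe])
  have hinner : op (Φ c) (op a b) = Φ (Φ b) := by
    rw [hassoc, hca, hunit_left]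
  calc op (op x (Φ c)) (op (Φ a) (Φ b)) = op (Φ x) (op (Φ c) (op a b)) := by
        rw [hassoc, hmulΦ]
    _ = e := by rw [hinner, ← hmulΦ, hx, hΦe]

end HomGroup

open HomGroup in
theorem stmt5_general {G : Type*} (op : G → G → G) (Φ : G ≃ G) (e : G) (inv : G → G)
    (hmulΦ : ∀ x y : G, Φ (op x y) = op (Φ x) (Φ y))
    (hassoc : ∀ x y z : G, op (Φ x) (op y z) = op (op x y) (Φ z))
    (hunit : ∀ x : G, op x e = Φ x ∧ op e x = Φ x)
    (hinv : ∀ x : G, op x (inv x) = e ∧ op (inv x) x = e) :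
    Φ e = e ∧
    (∀ x u v : G, op x u = e → op u x = e → op x v = e → op v x = e → u = v) ∧
    (∀ x y : G, inv (op x y) = op (inv y) (inv x)) := by
  have hunit_right := fun x => (hunit x).1
  have hunit_left := fun x => (hunit x).2
  have hΦe : Φ e = e := map_unit hmulΦ hunit_right hunit_left
  have inv_unique : ∀ x u v : G, op x u = e → op u x = e → op x v = e → op v x = e → u = v :=
    fun _ _ _ _ hux hxv _ => left_inv_eq_right_inv hassoc hunit_right hunit_left hux hxv
  refine ⟨hΦe, inv_unique, fun x y => inv_unique (op x y) _ _ (hinv _).1 (hinv _).2 ?_ ?_⟩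
  · exact op_op_rev_eq_unit hmulΦ hassoc hunit_left hΦe (hinv x).1 (hinv y).1
  · exact op_op_rev_eq_unit hmulΦ hassoc hunit_left hΦe (hinv y).2 (hinv x).2

/-- In a regular Hom-group `(G,⋄,e,Φ)` (with a chosen Hom-inverse
map `inv`): (i) `Φ(e) = e`; (ii) Hom-inverses are unique;
(iii) `(x ⋄ y)⁻¹ = y⁻¹ ⋄ x⁻¹`. -/
theorem stmt5 {G : Type*} (op : G → G → G) (Φ : G ≃ G) (e : G) (inv : G → G)
    (hmulΦ : ∀ x y : G, Φ (op x y) = op (Φ x) (Φ y))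
    (hassoc : ∀ x y z : G, op (Φ x) (op y z) = op (op x y) (Φ z))
    (hunit : ∀ x : G, op x e = Φ x ∧ op e x = Φ x)
    (huniq : ∀ e' : G, (∀ x : G, op x e' = Φ x ∧ op e' x = Φ x) → e' = e)
    (hinv : ∀ x : G, op x (inv x) = e ∧ op (inv x) x = e) :
    Φ e = e ∧
    (∀ x u v : G, op x u = e → op u x = e → op x v = e → op v x = e → u = v) ∧
    (∀ x y : G, inv (op x y) = op (inv y) (inv x)) :=
  stmt5_general op Φ e inv hmulΦ hassoc hunit hinv
end

section
/- Let A be a commutative real algebra and σ : A → A an algebra automorphism. If x and y are (σ,σ)-derivations of A, then both φ(x) := σ⁻¹∘x∘σ and [x,y]_σ := σ⁻¹∘x∘σ⁻¹∘y∘σ − σ⁻¹∘y∘σ⁻¹∘x∘σ are again (σ,σ)-derivations of A. -/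
/-!
For a `(σ,σ)`-derivation `x` the map `σ⁻¹ ∘ x` satisfies the ordinary Leibniz rule, since
`σ⁻¹ (x f * σ g) = σ⁻¹ (x f) * g`. Both `φ(x)` and `[x,y]_σ` are of the form `D ∘ σ` for an ordinary
derivation `D` (namely `σ⁻¹ ∘ x` and the commutator of `σ⁻¹ ∘ x` and `σ⁻¹ ∘ y`), and precomposing
an ordinary derivation with the algebra map `σ` gives a `(σ,σ)`-derivation.
-/

namespace Derivation

variable {R A : Type*} [CommSemiring R] [CommRing A] [Algebra R A]

def ofSigmaDerivation (σ : A ≃ₐ[R] A) (x : A →ₗ[R] A)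
    (hx : ∀ f g : A, x (f * g) = x f * σ g + σ f * x g) : Derivation R A A :=
  mk' (σ.symm.toLinearMap ∘ₗ x) fun f g => by
    simp only [LinearMap.comp_apply, AlgEquiv.toLinearMap_apply, hx, map_add, map_mul,
      AlgEquiv.symm_apply_apply, smul_eq_mul]
    ring

@[simp]
theorem ofSigmaDerivation_apply (σ : A ≃ₐ[R] A) (x : A →ₗ[R] A)
    (hx : ∀ f g : A, x (f * g) = x f * σ g + σ f * x g) (a : A) :
    ofSigmaDerivation σ x hx a = σ.symm (x a) :=
  rfl

theorem leibniz_comp_algHom {F : Type*} [FunLike F A A] [AlgHomClass F R A A]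
    (D : Derivation R A A) (σ : F) (f g : A) :
    D (σ (f * g)) = D (σ f) * σ g + σ f * D (σ g) := by
  rw [map_mul, leibniz, smul_eq_mul, smul_eq_mul]
  ring

end Derivation

/-- If `σ` is an algebra automorphism of a commutative real
algebra `A` and `x, y` are `(σ,σ)`-derivations of `A`, then
`φ(x) := σ⁻¹∘x∘σ` and `[x,y]_σ := σ⁻¹∘x∘σ⁻¹∘y∘σ − σ⁻¹∘y∘σ⁻¹∘x∘σ`
are again `(σ,σ)`-derivations of `A`. -/
theorem stmt8 {A : Type*} [CommRing A] [Algebra ℝ A] (σ : A ≃ₐ[ℝ] A)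
    (x y : A →ₗ[ℝ] A)
    (hx : ∀ f g : A, x (f * g) = x f * σ g + σ f * x g)
    (hy : ∀ f g : A, y (f * g) = y f * σ g + σ f * y g) :
    (∀ f g : A,
      σ.symm (x (σ (f * g)))
        = σ.symm (x (σ f)) * σ g + σ f * σ.symm (x (σ g))) ∧
    (∀ f g : A,
      σ.symm (x (σ.symm (y (σ (f * g))))) - σ.symm (y (σ.symm (x (σ (f * g)))))
        = (σ.symm (x (σ.symm (y (σ f)))) - σ.symm (y (σ.symm (x (σ f))))) * σ g
          + σ f * (σ.symm (x (σ.symm (y (σ g)))) - σ.symm (y (σ.symm (x (σ g)))))) := by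
  refine ⟨Derivation.leibniz_comp_algHom (Derivation.ofSigmaDerivation σ x hx) σ, fun f g => ?_⟩
  simpa only [Derivation.commutator_apply, Derivation.ofSigmaDerivation_apply] using
    Derivation.leibniz_comp_algHom
      ⁅Derivation.ofSigmaDerivation σ x hx, Derivation.ofSigmaDerivation σ y hy⁆ σ f g
end

section
/- Let (G,⋄,e,Φ) be a regular Hom-group and define Ad̃ : G × G → G by Ad̃(a,x) := Φ⁻¹(a ⋄ x) ⋄ a⁻¹, written a ⊙ x := Ad̃(a,x). Then Ad̃ is an action of (G,⋄,e,Φ) on G with respect to Φ: (1) e ⊙ x = Φ(x) for all x ∈ G; (2) (a ⋄ b) ⊙ x = Φ(a) ⊙ (Φ⁻¹(Φ(b) ⊙ x)) for all a,b,x ∈ G. -/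
/-!
A regular Hom-group is the Yau twist of an honest group: `x * y := Φ⁻¹ (x ⋄ y)` is a group law
with unit `e` and inverse `inv`, `Φ` is an automorphism of it, and `x ⋄ y = Φ (x * y)`.
In these terms `Ad̃ (a, x) = Φ (a * x * a⁻¹)`, and both action axioms follow from the fact that
`Φ` is multiplicative.
-/

section YauTwist

variable {G : Type*} [Group G] (φ : G ≃* G) {op : G → G → G}
  (hop : ∀ x y, op x y = φ (x * y))
include hop

theorem yauTwist_ad_eq (a x : G) : op (φ.symm (op a x)) a⁻¹ = φ (a * x * a⁻¹) := by
  rw [hop, hop, φ.symm_apply_apply]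

theorem yauTwist_ad_one (x : G) : op (φ.symm (op 1 x)) 1⁻¹ = φ x := by
  rw [yauTwist_ad_eq φ hop, one_mul, inv_one, mul_one]

theorem yauTwist_ad_op (a b x : G) :
    op (φ.symm (op (op a b) x)) (op a b)⁻¹
      = op (φ.symm (op (φ a) (φ.symm (op (φ.symm (op (φ b) x)) (φ b)⁻¹)))) (φ a)⁻¹ := by
  rw [yauTwist_ad_eq φ hop, yauTwist_ad_eq φ hop, yauTwist_ad_eq φ hop, φ.symm_apply_apply, hop,
    map_mul φ a b]
  group

end YauTwist

section RegularHomGroup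

variable {G : Type*} {op : G → G → G} {Φ : G ≃ G} {e : G} {inv : G → G}
  (hmulΦ : ∀ x y, Φ (op x y) = op (Φ x) (Φ y))
  (hunit : ∀ x, op x e = Φ x ∧ op e x = Φ x)

include hmulΦ hunit in
theorem apply_homUnit_eq : Φ e = e := by
  -- `Φ e` is again a left Hom-unit, so `Φ (Φ e) = Φ e ⋄ e = Φ e`.
  have hleft : op (Φ e) e = Φ e := calc
    op (Φ e) e = Φ (op e (Φ.symm e)) := by rw [hmulΦ, Φ.apply_symm_apply]
    _ = Φ e := by rw [(hunit _).2, Φ.apply_symm_apply]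
  exact Φ.injective (by rw [← (hunit (Φ e)).1, hleft])

variable (hassoc : ∀ x y z, op (Φ x) (op y z) = op (op x y) (Φ z))
  (hinv : ∀ x, op x (inv x) = e ∧ op (inv x) x = e)

abbrev untwistGroup : Group G where
  mul x y := Φ.symm (op x y)
  one := e
  inv := inv
  mul_assoc x y z := Φ.injective <| Φ.injective <| by
    change Φ (Φ (Φ.symm (op (Φ.symm (op x y)) z))) = Φ (Φ (Φ.symm (op x (Φ.symm (op y z)))))
    simp only [Φ.apply_symm_apply, hmulΦ, hassoc]
  one_mul x := by
    change Φ.symm (op e x) = x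
    rw [(hunit x).2, Φ.symm_apply_apply]
  mul_one x := by
    change Φ.symm (op x e) = x
    rw [(hunit x).1, Φ.symm_apply_apply]
  inv_mul_cancel x := by
    change Φ.symm (op (inv x) x) = e
    rw [(hinv x).2, Equiv.symm_apply_eq, apply_homUnit_eq hmulΦ hunit]

include hmulΦ hunit hassoc hinv in
theorem exists_yauTwist :
    ∃ _ : Group G, ∃ φ : G ≃* G, ⇑φ = Φ ∧ ⇑φ.symm = Φ.symm ∧ (∀ x y, op x y = φ (x * y)) ∧
      e = 1 ∧ ∀ x, inv x = x⁻¹ := by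
  let _ := untwistGroup hmulΦ hunit hassoc hinv
  refine ⟨‹_›, ⟨Φ, fun x y => ?_⟩, rfl, rfl, fun x y => (Φ.apply_symm_apply _).symm, rfl,
    fun _ => rfl⟩
  change Φ (Φ.symm (op x y)) = Φ.symm (op (Φ x) (Φ y))
  rw [← hmulΦ, Φ.apply_symm_apply, Φ.symm_apply_apply]

end RegularHomGroup

theorem stmt12_general {G : Type*} (op : G → G → G) (Φ : G ≃ G) (e : G) (inv : G → G)
    (hmulΦ : ∀ x y : G, Φ (op x y) = op (Φ x) (Φ y))
    (hassoc : ∀ x y z : G, op (Φ x) (op y z) = op (op x y) (Φ z))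
    (hunit : ∀ x : G, op x e = Φ x ∧ op e x = Φ x)
    (hinv : ∀ x : G, op x (inv x) = e ∧ op (inv x) x = e) :
    (∀ x : G, op (Φ.symm (op e x)) (inv e) = Φ x) ∧
    (∀ a b x : G,
      op (Φ.symm (op (op a b) x)) (inv (op a b))
        = op (Φ.symm (op (Φ a)
            (Φ.symm (op (Φ.symm (op (Φ b) x)) (inv (Φ b)))))) (inv (Φ a))) := by
  obtain ⟨_, φ, hφ, hφsymm, hop, rfl, hinv'⟩ := exists_yauTwist hmulΦ hunit hassoc hinv
  simp only [← hφ, ← hφsymm, hinv']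
  exact ⟨yauTwist_ad_one φ hop, yauTwist_ad_op φ hop⟩

/-- In a regular Hom-group `(G,⋄,e,Φ)` the map
`a ⊙ x := Ad̃(a,x) := Φ⁻¹(a ⋄ x) ⋄ a⁻¹` is an action of `G` on itself with
respect to `Φ`: (1) `e ⊙ x = Φ(x)`;
(2) `(a ⋄ b) ⊙ x = Φ(a) ⊙ (Φ⁻¹(Φ(b) ⊙ x))`. -/
theorem stmt12 {G : Type*} (op : G → G → G) (Φ : G ≃ G) (e : G) (inv : G → G)
    (hmulΦ : ∀ x y : G, Φ (op x y) = op (Φ x) (Φ y))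
    (hassoc : ∀ x y z : G, op (Φ x) (op y z) = op (op x y) (Φ z))
    (hunit : ∀ x : G, op x e = Φ x ∧ op e x = Φ x)
    (huniq : ∀ e' : G, (∀ x : G, op x e' = Φ x ∧ op e' x = Φ x) → e' = e)
    (hinv : ∀ x : G, op x (inv x) = e ∧ op (inv x) x = e) :
    (∀ x : G, op (Φ.symm (op e x)) (inv e) = Φ x) ∧
    (∀ a b x : G,
      op (Φ.symm (op (op a b) x)) (inv (op a b))
        = op (Φ.symm (op (Φ a)
            (Φ.symm (op (Φ.symm (op (Φ b) x)) (inv (Φ b)))))) (inv (Φ a))) :=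
  stmt12_general op Φ e inv hmulΦ hassoc hunit hinv
end

section
/- Let E be a real Banach space, β a continuous linear automorphism of E, and A,B continuous linear endomorphisms of E. Define Ω(t,s) := β ∘ exp(s·(A∘β⁻¹)) ∘ exp(t·(B∘β⁻¹)) ∘ exp(−s·(A∘β⁻¹)) ∘ exp(−t·(B∘β⁻¹)) for t,s ∈ ℝ. Then the iterated derivative (d/dt)|_{t=0} (d/ds)|_{s=0} Ω(t,s) equals [A,B]_β := β∘A∘β⁻¹∘B∘β⁻¹ − β∘B∘β⁻¹∘A∘β⁻¹. -/
/-!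
Differentiating the conjugation `s ↦ exp(sX) M exp(-sX)` at `s = 0` gives the commutator
`XM - MX`. Applied in `s`, this turns the group commutator `c e^{sX} e^{tY} e^{-sX} e^{-tY}`
into `c (X - e^{tY} X e^{-tY})`, and applied once more in `t` it yields `c (XY - YX)`.
With `c = β`, `X = Aβ⁻¹`, `Y = Bβ⁻¹` this is `[A,B]_β`.
-/

open NormedSpace

section ExpCommutator

variable {𝕂 𝔸 : Type*} [RCLike 𝕂] [NormedRing 𝔸] [NormedAlgebra 𝕂 𝔸] [CompleteSpace 𝔸]

theorem exp_smul_mul_exp_neg_smul (t : 𝕂) (X : 𝔸) : exp (t • X) * exp ((-t) • X) = 1 := by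
  have hball : ∀ x : 𝔸, x ∈ Metric.eball (0 : 𝔸) (expSeries 𝕂 𝔸).radius := fun x =>
    (expSeries_radius_eq_top 𝕂 𝔸).symm ▸ edist_lt_top _ _
  rw [← exp_add_of_commute_of_mem_ball (((Commute.refl X).smul_left t).smul_right (-t))
    (hball _) (hball _), ← add_smul, add_neg_cancel, zero_smul, exp_zero]

theorem hasDerivAt_exp_smul_mul_mul_exp_neg_smul (X M : 𝔸) :
    HasDerivAt (fun s : 𝕂 => exp (s • X) * M * exp ((-s) • X)) (X * M - M * X) 0 := by
  have hneg : HasDerivAt (fun s : 𝕂 => exp ((-s) • X)) (-X) 0 := by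
    simpa only [neg_smul, smul_neg, neg_zero, zero_smul, exp_zero, one_mul]
      using hasDerivAt_exp_smul_const (-X) (0 : 𝕂)
  have h := ((hasDerivAt_exp_smul_const' X (0 : 𝕂)).mul_const M).mul hneg
  simp only [zero_smul, neg_zero, exp_zero, mul_one, one_mul, mul_neg, ← sub_eq_add_neg] at h
  exact h

theorem deriv_deriv_mul_exp_smul_commutator (c X Y : 𝔸) :
    deriv (fun t : 𝕂 => deriv (fun s : 𝕂 =>
        c * exp (s • X) * exp (t • Y) * exp ((-s) • X) * exp ((-t) • Y)) 0) 0
      = c * (X * Y - Y * X) := by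
  have inner (t : 𝕂) : deriv (fun s : 𝕂 =>
      c * exp (s • X) * exp (t • Y) * exp ((-s) • X) * exp ((-t) • Y)) 0
        = c * X - c * (exp (t • Y) * X * exp ((-t) • Y)) := by
    have h := ((hasDerivAt_exp_smul_mul_mul_exp_neg_smul (𝕂 := 𝕂) X (exp (t • Y))).const_mul
      c).mul_const (exp ((-t) • Y))
    simp only [mul_assoc] at h ⊢
    rw [h.deriv, sub_mul, mul_assoc, mul_assoc, exp_smul_mul_exp_neg_smul, mul_one, mul_sub]
  simp_rw [inner]
  rw [(((hasDerivAt_exp_smul_mul_mul_exp_neg_smul Y X).const_mul c).const_sub (c * X)).deriv]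
  noncomm_ring

end ExpCommutator

/-- For a continuous linear automorphism `β` of a real Banach
space `E` and `A, B ∈ L(E)`, with
`Ω(t,s) := β ∘ exp(s·(A∘β⁻¹)) ∘ exp(t·(B∘β⁻¹)) ∘ exp(−s·(A∘β⁻¹)) ∘ exp(−t·(B∘β⁻¹))`,
the iterated derivative `(d/dt)|₀ (d/ds)|₀ Ω(t,s)` equals
`[A,B]_β = β∘A∘β⁻¹∘B∘β⁻¹ − β∘B∘β⁻¹∘A∘β⁻¹`. -/
theorem stmt14 {E : Type*} [NormedAddCommGroup E] [NormedSpace ℝ E]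
    [CompleteSpace E] (β : E ≃L[ℝ] E) (A B : E →L[ℝ] E) :
    deriv (fun t : ℝ => deriv (fun s : ℝ =>
        (β : E →L[ℝ] E)
          * exp (s • (A * (β.symm : E →L[ℝ] E)))
          * exp (t • (B * (β.symm : E →L[ℝ] E)))
          * exp ((-s) • (A * (β.symm : E →L[ℝ] E)))
          * exp ((-t) • (B * (β.symm : E →L[ℝ] E)))) 0) 0
      = (β : E →L[ℝ] E) * A * (β.symm : E →L[ℝ] E) * B * (β.symm : E →L[ℝ] E)
        - (β : E →L[ℝ] E) * B * (β.symm : E →L[ℝ] E) * A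
          * (β.symm : E →L[ℝ] E) := by
  refine (deriv_deriv_mul_exp_smul_commutator (β : E →L[ℝ] E) (A * (β.symm : E →L[ℝ] E))
    (B * (β.symm : E →L[ℝ] E))).trans ?_
  noncomm_ring
end

section
/- Let (g,[·,·],φ) be a regular Hom-Lie algebra and D : g → g a linear map. Then D is a derivation of (g,[·,·],φ) if and only if D∘φ⁻¹ is a derivation of the Lie algebra (g,[·,·]_Lie) with bracket [x,y]_Lie := [φ⁻¹(x), φ⁻¹(y)]; that is, D[x,y] = [φ(x), (φ⁻¹∘D∘φ)(y)] + [(φ⁻¹∘D∘φ)(x), φ(y)] holds for all x,y ∈ g if and only if (D∘φ⁻¹)([x,y]_Lie) = [(D∘φ⁻¹)(x), y]_Lie + [x, (D∘φ⁻¹)(y)]_Lie holds for all x,y ∈ g. -/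
/-!
Since `φ⁻¹` is multiplicative along with `φ`, substituting `x ↦ φ⁻¹ x` in the Hom-derivation
identity and `x ↦ φ x` in the Lie-derivation identity turns both into the same identity
`D [φ⁻¹ u, φ⁻¹ v] = [φ⁻¹ (D u), v] + [u, φ⁻¹ (D v)]`.
-/

theorem LinearEquiv.symm_map_of_map_bilin {R M : Type*} [CommSemiring R] [AddCommMonoid M]
    [Module R M] (b : M →ₗ[R] M →ₗ[R] M) (φ : M ≃ₗ[R] M)
    (hmul : ∀ x y, φ (b x y) = b (φ x) (φ y)) (x y : M) :
    φ.symm (b x y) = b (φ.symm x) (φ.symm y) :=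
  φ.injective <| by simp only [hmul, LinearEquiv.apply_symm_apply]

section
variable {R M : Type*} [CommSemiring R] [AddCommMonoid M] [Module R M]
  (b : M →ₗ[R] M →ₗ[R] M) (φ : M ≃ₗ[R] M) (D : M →ₗ[R] M)

theorem homDerivation_iff_reindexed :
    (∀ x y, D (b x y) = b (φ x) (φ.symm (D (φ y))) + b (φ.symm (D (φ x))) (φ y)) ↔
      ∀ u v, D (b (φ.symm u) (φ.symm v)) = b (φ.symm (D u)) v + b u (φ.symm (D v)) := by
  rw [φ.symm.surjective.forall₂]
  simp only [LinearEquiv.apply_symm_apply, add_comm]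

theorem lieDerivation_iff_reindexed (hmul : ∀ x y, φ (b x y) = b (φ x) (φ y)) :
    (∀ x y, D (φ.symm (b (φ.symm x) (φ.symm y)))
        = b (φ.symm (D (φ.symm x))) (φ.symm y) + b (φ.symm x) (φ.symm (D (φ.symm y)))) ↔
      ∀ u v, D (b (φ.symm u) (φ.symm v)) = b (φ.symm (D u)) v + b u (φ.symm (D v)) := by
  rw [φ.surjective.forall₂]
  simp only [LinearEquiv.symm_apply_apply, φ.symm_map_of_map_bilin b hmul]

end

theorem stmt16_general {g : Type*} [AddCommGroup g] [Module ℝ g]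
    (b : g →ₗ[ℝ] g →ₗ[ℝ] g) (φ : g ≃ₗ[ℝ] g)
    (hmul : ∀ x y : g, φ (b x y) = b (φ x) (φ y))
    (D : g →ₗ[ℝ] g) :
    (∀ x y : g,
      D (b x y) = b (φ x) (φ.symm (D (φ y))) + b (φ.symm (D (φ x))) (φ y))
    ↔ (∀ x y : g,
        D (φ.symm (b (φ.symm x) (φ.symm y)))
          = b (φ.symm (D (φ.symm x))) (φ.symm y)
            + b (φ.symm x) (φ.symm (D (φ.symm y)))) :=
  (homDerivation_iff_reindexed b φ D).trans (lieDerivation_iff_reindexed b φ D hmul).symm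

/-- A linear map `D` is a derivation of a regular Hom-Lie
algebra `(g, b, φ)` if and only if `D∘φ⁻¹` is a derivation of the Lie algebra
`(g, [·,·]_Lie)` with `[x,y]_Lie := b (φ⁻¹ x) (φ⁻¹ y)`. -/
theorem stmt16 {g : Type*} [AddCommGroup g] [Module ℝ g]
    (b : g →ₗ[ℝ] g →ₗ[ℝ] g) (φ : g ≃ₗ[ℝ] g)
    (hskew : ∀ x y : g, b x y = - b y x)
    (hmul : ∀ x y : g, φ (b x y) = b (φ x) (φ y))
    (hjac : ∀ x y z : g,
      b (φ x) (b y z) + b (φ y) (b z x) + b (φ z) (b x y) = 0)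
    (D : g →ₗ[ℝ] g) :
    (∀ x y : g,
      D (b x y) = b (φ x) (φ.symm (D (φ y))) + b (φ.symm (D (φ x))) (φ y))
    ↔ (∀ x y : g,
        D (φ.symm (b (φ.symm x) (φ.symm y)))
          = b (φ.symm (D (φ.symm x))) (φ.symm y)
            + b (φ.symm x) (φ.symm (D (φ.symm y)))) :=
  stmt16_general b φ hmul D
end

section
/- Let (g,[·,·],φ) be a regular Hom-Lie algebra. Then: (1) φ is an automorphism of (g,[·,·],φ); (2) if θ is an automorphism of (g,[·,·],φ), then so are its inverse θ⁻¹ and φ∘θ∘φ⁻¹; (3) if θ₁ and θ₂ are automorphisms of (g,[·,·],φ), then so is θ₁ ⋄ θ₂ := φ∘θ₁∘φ⁻¹∘θ₂∘φ⁻¹. Hence the set Aut(g) of automorphisms, with product ⋄, Hom-unit φ, and structure map θ ↦ φ∘θ∘φ⁻¹, is a Hom-subgroup of the regular Hom-group (GL(g), ⋄, φ, Ad_φ). -/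
/-!
The automorphism condition says `θ ∘ [·,·] = [·,·] ∘ (c θ × c θ)` with `c θ = φ⁻¹ ∘ θ ∘ φ`, and
`c` is a group automorphism of `GL(g)`; hence the automorphisms form an ordinary subgroup of
`GL(g)`. Multiplicativity of `φ` says exactly that `φ` lies in it. Then `φ ∘ θ ∘ φ⁻¹` and
`θ₁ ⋄ θ₂ = (φ ∘ θ₁ ∘ φ⁻¹) ∘ θ₂ ∘ φ⁻¹` are products of elements of this subgroup.
-/

/-- An automorphism of a regular Hom-Lie algebra `(g, b, φ)`: a bijective
linear map `θ` with `θ[x,y] = [(φ⁻¹∘θ∘φ)(x), (φ⁻¹∘θ∘φ)(y)]`. -/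
def IsHomLieAut {g : Type*} [AddCommGroup g] [Module ℝ g]
    (b : g →ₗ[ℝ] g →ₗ[ℝ] g) (φ : g ≃ₗ[ℝ] g) (θ : g ≃ₗ[ℝ] g) : Prop :=
  ∀ x y : g, θ (b x y) = b (φ.symm (θ (φ x))) (φ.symm (θ (φ y)))

namespace IsHomLieAut

variable {g : Type*} [AddCommGroup g] [Module ℝ g] {b : g →ₗ[ℝ] g →ₗ[ℝ] g} {φ : g ≃ₗ[ℝ] g}

theorem one : IsHomLieAut b φ 1 := fun x y => by
  simp

theorem mul {θ₁ θ₂ : g ≃ₗ[ℝ] g} (h₁ : IsHomLieAut b φ θ₁) (h₂ : IsHomLieAut b φ θ₂) :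
    IsHomLieAut b φ (θ₁ * θ₂) := fun x y => by
  simp only [LinearEquiv.mul_apply]
  rw [h₂, h₁, φ.apply_symm_apply, φ.apply_symm_apply]

theorem inv {θ : g ≃ₗ[ℝ] g} (h : IsHomLieAut b φ θ) : IsHomLieAut b φ θ⁻¹ := fun x y => by
  apply θ.injective
  rw [h]
  simp only [LinearEquiv.coe_inv, θ.apply_symm_apply, φ.apply_symm_apply, φ.symm_apply_apply]

theorem self (hmul : ∀ x y : g, φ (b x y) = b (φ x) (φ y)) : IsHomLieAut b φ φ := fun x y => by
  simp [hmul]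

end IsHomLieAut

def homLieAutSubgroup {g : Type*} [AddCommGroup g] [Module ℝ g]
    (b : g →ₗ[ℝ] g →ₗ[ℝ] g) (φ : g ≃ₗ[ℝ] g) : Subgroup (g ≃ₗ[ℝ] g) where
  carrier := {θ | IsHomLieAut b φ θ}
  one_mem' := IsHomLieAut.one
  mul_mem' := IsHomLieAut.mul
  inv_mem' := IsHomLieAut.inv

theorem stmt17_general {g : Type*} [AddCommGroup g] [Module ℝ g]
    (b : g →ₗ[ℝ] g →ₗ[ℝ] g) (φ : g ≃ₗ[ℝ] g)
    (hmul : ∀ x y : g, φ (b x y) = b (φ x) (φ y)) :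
    IsHomLieAut b φ φ ∧
    (∀ θ : g ≃ₗ[ℝ] g, IsHomLieAut b φ θ →
      IsHomLieAut b φ θ⁻¹ ∧ IsHomLieAut b φ (φ * θ * φ⁻¹)) ∧
    (∀ θ₁ θ₂ : g ≃ₗ[ℝ] g, IsHomLieAut b φ θ₁ → IsHomLieAut b φ θ₂ →
      IsHomLieAut b φ (φ * θ₁ * φ⁻¹ * θ₂ * φ⁻¹)) := by
  let H := homLieAutSubgroup b φ
  have hφ : φ ∈ H := IsHomLieAut.self hmul
  have hφinv : φ⁻¹ ∈ H := H.inv_mem hφ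
  have hconj : ∀ θ ∈ H, φ * θ * φ⁻¹ ∈ H := fun θ hθ =>
    H.mul_mem (H.mul_mem hφ hθ) hφinv
  refine ⟨hφ, fun θ hθ => ⟨H.inv_mem hθ, hconj θ hθ⟩, fun θ₁ θ₂ h₁ h₂ => ?_⟩
  exact H.mul_mem (H.mul_mem (hconj θ₁ h₁) h₂) hφinv

/-- In a regular Hom-Lie algebra `(g, b, φ)`:
(1) `φ` is an automorphism; (2) if `θ` is an automorphism then so are `θ⁻¹`
and `φ∘θ∘φ⁻¹`; (3) if `θ₁, θ₂` are automorphisms then so is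
`θ₁ ⋄ θ₂ := φ∘θ₁∘φ⁻¹∘θ₂∘φ⁻¹`. Hence `(Aut(g), ⋄, φ, Ad_φ)` is a Hom-subgroup
of the regular Hom-group `(GL(g), ⋄, φ, Ad_φ)`. -/
theorem stmt17 {g : Type*} [AddCommGroup g] [Module ℝ g]
    (b : g →ₗ[ℝ] g →ₗ[ℝ] g) (φ : g ≃ₗ[ℝ] g)
    (hskew : ∀ x y : g, b x y = - b y x)
    (hmul : ∀ x y : g, φ (b x y) = b (φ x) (φ y))
    (hjac : ∀ x y z : g,
      b (φ x) (b y z) + b (φ y) (b z x) + b (φ z) (b x y) = 0) :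
    IsHomLieAut b φ φ ∧
    (∀ θ : g ≃ₗ[ℝ] g, IsHomLieAut b φ θ →
      IsHomLieAut b φ θ⁻¹ ∧ IsHomLieAut b φ (φ * θ * φ⁻¹)) ∧
    (∀ θ₁ θ₂ : g ≃ₗ[ℝ] g, IsHomLieAut b φ θ₁ → IsHomLieAut b φ θ₂ →
      IsHomLieAut b φ (φ * θ₁ * φ⁻¹ * θ₂ * φ⁻¹)) :=
  stmt17_general b φ hmul
end

section
/- Let g be a finite-dimensional real normed vector space and (g,[·,·],φ) a regular Hom-Lie algebra whose bracket is bilinear and whose structure map φ is a (continuous) linear automorphism. Let D : g → g be a linear map. Then D is a derivation of (g,[·,·],φ) if and only if for every t ∈ ℝ the map Hexp(tD) := φ ∘ exp(t·(D∘φ⁻¹)) is an automorphism of (g,[·,·],φ), i.e., Hexp(tD)[x,y] = [(φ⁻¹∘Hexp(tD)∘φ)(x), (φ⁻¹∘Hexp(tD)∘φ)(y)] for all x,y ∈ g and all t ∈ ℝ. Here exp denotes the exponential map on the algebra of linear endomorphisms of g. -/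
/-!
Writing `E := D ∘ φ⁻¹` and `⟦u, v⟧ := φ⁻¹[u, v]`, multiplicativity of `φ` turns the
derivation identity for `D` into the ordinary Leibniz rule of `E` for `⟦·,·⟧`, and the
automorphism identity for `φ ∘ exp (tE)` into `exp (tE)` preserving `⟦·,·⟧`. For these,
both `t ↦ exp (tE) ⟦u, v⟧` and `t ↦ ⟦exp (tE) u, exp (tE) v⟧` solve `y' = E y` with the same
initial value exactly when `E` satisfies the Leibniz rule, so ODE uniqueness gives one
direction and differentiating at `t = 0` the other.
-/

open NormedSpace

section Exponential

variable {g : Type*} [NormedAddCommGroup g] [NormedSpace ℝ g] [CompleteSpace g]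

theorem hasDerivAt_exp_smul_apply (E : g →L[ℝ] g) (w : g) (t : ℝ) :
    HasDerivAt (fun s : ℝ => exp (s • E) w) (E (exp (t • E) w)) t := by
  simpa using (hasDerivAt_exp_smul_const' (𝕂 := ℝ) E t).clm_apply (hasDerivAt_const t w)

theorem hasDerivAt_bilinear_exp_smul_apply (C : g →L[ℝ] g →L[ℝ] g) (E : g →L[ℝ] g)
    (u v : g) (t : ℝ) :
    HasDerivAt (fun s : ℝ => C (exp (s • E) u) (exp (s • E) v))
      (C (E (exp (t • E) u)) (exp (t • E) v) + C (exp (t • E) u) (E (exp (t • E) v))) t := by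
  simpa using (C.hasFDerivAt.comp_hasDerivAt t (hasDerivAt_exp_smul_apply E u t)).clm_apply
    (hasDerivAt_exp_smul_apply E v t)

theorem exp_smul_apply_bilinear_of_leibniz (C : g →L[ℝ] g →L[ℝ] g) (E : g →L[ℝ] g)
    (hE : ∀ u v, E (C u v) = C (E u) v + C u (E v)) (t : ℝ) (u v : g) :
    exp (t • E) (C u v) = C (exp (t • E) u) (exp (t • E) v) := by
  have hsol := ODE_solution_unique_univ (v := fun _ => E) (s := fun _ => Set.univ) (t₀ := 0)
    (f := fun s : ℝ => exp (s • E) (C u v))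
    (g := fun s : ℝ => C (exp (s • E) u) (exp (s • E) v))
    (fun _ => E.lipschitz.lipschitzOnWith)
    (fun s => ⟨hasDerivAt_exp_smul_apply E (C u v) s, trivial⟩)
    (fun s => ⟨(hE _ _).symm ▸ hasDerivAt_bilinear_exp_smul_apply C E u v s, trivial⟩)
    (by simp)
  exact congrFun hsol t

theorem leibniz_of_exp_smul_apply_bilinear (C : g →L[ℝ] g →L[ℝ] g) (E : g →L[ℝ] g) (u v : g)
    (h : ∀ t : ℝ, exp (t • E) (C u v) = C (exp (t • E) u) (exp (t • E) v)) :
    E (C u v) = C (E u) v + C u (E v) := by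
  have hL := hasDerivAt_exp_smul_apply E (C u v) 0
  rw [funext h] at hL
  simpa using hL.unique (hasDerivAt_bilinear_exp_smul_apply C E u v 0)

theorem leibniz_iff_forall_exp_smul_apply_bilinear (C : g →L[ℝ] g →L[ℝ] g) (E : g →L[ℝ] g) :
    (∀ u v, E (C u v) = C (E u) v + C u (E v)) ↔
      ∀ (t : ℝ) (u v : g), exp (t • E) (C u v) = C (exp (t • E) u) (exp (t • E) v) :=
  ⟨exp_smul_apply_bilinear_of_leibniz C E, fun h u v =>
    leibniz_of_exp_smul_apply_bilinear C E u v fun t => h t u v⟩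

end Exponential

section Twist

variable {R M : Type*} [CommSemiring R] [AddCommMonoid M] [Module R M]
  {b : M →ₗ[R] M →ₗ[R] M} {φ : M ≃ₗ[R] M}

theorem symm_apply_bracket_of_map_bracket (hmul : ∀ x y, φ (b x y) = b (φ x) (φ y)) (u v : M) :
    φ.symm (b u v) = b (φ.symm u) (φ.symm v) := by
  rw [φ.symm_apply_eq, hmul, φ.apply_symm_apply, φ.apply_symm_apply]

theorem homDerivation_iff_leibniz_twist (hmul : ∀ x y, φ (b x y) = b (φ x) (φ y)) (D : M → M) :
    (∀ x y, D (b x y) = b (φ x) (φ.symm (D (φ y))) + b (φ.symm (D (φ x))) (φ y)) ↔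
      ∀ u v, D (φ.symm (φ.symm (b u v))) =
        φ.symm (b (D (φ.symm u)) v) + φ.symm (b u (D (φ.symm v))) := by
  simp only [symm_apply_bracket_of_map_bracket hmul]
  refine ⟨fun h u v => ?_, fun h x y => ?_⟩
  · rw [h, add_comm]
    simp
  · simpa [add_comm] using h (φ (φ x)) (φ (φ y))

theorem homAutomorphism_iff_map_twist (hmul : ∀ x y, φ (b x y) = b (φ x) (φ y)) (A : M → M) :
    (∀ x y, φ (A (b x y)) = b (A (φ x)) (A (φ y))) ↔
      ∀ u v, A (φ.symm (b u v)) = φ.symm (b (A u) (A v)) := by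
  simp only [← φ.eq_symm_apply]
  refine ⟨fun h u v => ?_, fun h x y => ?_⟩
  · simpa [symm_apply_bracket_of_map_bracket hmul] using h (φ.symm u) (φ.symm v)
  · simpa [← hmul] using h (φ x) (φ y)

end Twist

theorem stmt18_general {g : Type*} [NormedAddCommGroup g] [NormedSpace ℝ g]
    [FiniteDimensional ℝ g]
    (b : g →ₗ[ℝ] g →ₗ[ℝ] g) (φ : g ≃L[ℝ] g)
    (hmul : ∀ x y : g, φ (b x y) = b (φ x) (φ y))
    (D : g →L[ℝ] g) :
    (∀ x y : g,
      D (b x y) = b (φ x) (φ.symm (D (φ y))) + b (φ.symm (D (φ x))) (φ y))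
    ↔ (∀ (t : ℝ) (x y : g),
        ((φ : g →L[ℝ] g) * exp (t • (D * (φ.symm : g →L[ℝ] g)))) (b x y)
          = b (φ.symm (((φ : g →L[ℝ] g)
                * exp (t • (D * (φ.symm : g →L[ℝ] g)))) (φ x)))
              (φ.symm (((φ : g →L[ℝ] g)
                * exp (t • (D * (φ.symm : g →L[ℝ] g)))) (φ y)))) := by
  -- `C u v` is `φ.symm (b u v)` definitionally, which the final `exact` relies on.
  let C : g →L[ℝ] g →L[ℝ] g := LinearMap.toContinuousLinearMap
    (LinearMap.toContinuousLinearMap.toLinearMap ∘ₗ b.compr₂ φ.symm.toLinearMap)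
  simp only [mul_apply_eq_comp, ContinuousLinearEquiv.coe_coe,
    ContinuousLinearEquiv.symm_apply_apply]
  refine (homDerivation_iff_leibniz_twist (φ := φ.toLinearEquiv) hmul D).trans (Iff.trans ?_
    (forall_congr' fun t => (homAutomorphism_iff_map_twist (φ := φ.toLinearEquiv) hmul _).symm))
  exact leibniz_iff_forall_exp_smul_apply_bilinear C (D * (φ.symm : g →L[ℝ] g))

/-- Let `g` be a finite-dimensional real normed space carrying a
regular Hom-Lie algebra structure `(g, b, φ)` with `φ` a continuous linear
automorphism, and let `D : g → g` be a (continuous) linear map. Then `D` is a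
derivation of `(g, b, φ)` if and only if for every `t ∈ ℝ` the map
`Hexp(tD) := φ ∘ exp(t·(D∘φ⁻¹))` is an automorphism of `(g, b, φ)`, i.e.
`Hexp(tD)[x,y] = [(φ⁻¹∘Hexp(tD)∘φ)(x), (φ⁻¹∘Hexp(tD)∘φ)(y)]` for all `x, y`. -/
theorem stmt18 {g : Type*} [NormedAddCommGroup g] [NormedSpace ℝ g]
    [FiniteDimensional ℝ g]
    (b : g →ₗ[ℝ] g →ₗ[ℝ] g) (φ : g ≃L[ℝ] g)
    (hskew : ∀ x y : g, b x y = - b y x)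
    (hmul : ∀ x y : g, φ (b x y) = b (φ x) (φ y))
    (hjac : ∀ x y z : g,
      b (φ x) (b y z) + b (φ y) (b z x) + b (φ z) (b x y) = 0)
    (D : g →L[ℝ] g) :
    (∀ x y : g,
      D (b x y) = b (φ x) (φ.symm (D (φ y))) + b (φ.symm (D (φ x))) (φ y))
    ↔ (∀ (t : ℝ) (x y : g),
        ((φ : g →L[ℝ] g) * exp (t • (D * (φ.symm : g →L[ℝ] g)))) (b x y)
          = b (φ.symm (((φ : g →L[ℝ] g)
                * exp (t • (D * (φ.symm : g →L[ℝ] g)))) (φ x)))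
              (φ.symm (((φ : g →L[ℝ] g)
                * exp (t • (D * (φ.symm : g →L[ℝ] g)))) (φ y)))) :=
  stmt18_general b φ hmul D
end
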